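/- Let X and Y be bounded linear operators on a complex Hilbert space H. Then w(X + Y) ≤ 2 w(S), where S is the operator on H ⊕ H given by the 2×2 operator matrix with zero diagonal entries, (1,2)-entry X, and (2,1)-entry Y, and w denotes the numerical radius. -/

import Mathlib

/-- The numerical radius of a bounded linear operator. -/
noncomputable def numRadius {E : Type*} [NormedAddCommGroup E] [InnerProductSpace ℂ E]
    (T : E →L[ℂ] E) : ℝ :=
  ⨆ x : {x : E // ‖x‖ = 1}, ‖(inner ℂ (T x.val) x.val : ℂ)‖

/-- The 2×2 operator matrix `[[0, C],[D, 0]]` acting on `H ⊕ H` by `(x, y) ↦ (C y, D x)`. -/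
noncomputable def offDiagOp {H : Type*} [NormedAddCommGroup H] [InnerProductSpace ℂ H]
    (C D : H →L[ℂ] H) : WithLp 2 (H × H) →L[ℂ] WithLp 2 (H × H) :=
  ((WithLp.prodContinuousLinearEquiv 2 ℂ H H).symm : (H × H) →L[ℂ] WithLp 2 (H × H)) ∘L
    ((C ∘L ContinuousLinearMap.snd ℂ H H).prod (D ∘L ContinuousLinearMap.fst ℂ H H)) ∘L
    ((WithLp.prodContinuousLinearEquiv 2 ℂ H H) : WithLp 2 (H × H) →L[ℂ] (H × H))

/-! Testing the numerical radius of `[[0, X],[Y, 0]]` on the diagonal vector `(x, x)` gives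
`⟪(X + Y) x, x⟫`, while `‖(x, x)‖² = 2 ‖x‖²`. -/

section NumRadius

variable {E : Type*} [NormedAddCommGroup E] [InnerProductSpace ℂ E]

lemma numRadius_bddAbove (T : E →L[ℂ] E) :
    BddAbove (Set.range fun x : {x : E // ‖x‖ = 1} => ‖(inner ℂ (T x.val) x.val : ℂ)‖) := by
  refine ⟨‖T‖, ?_⟩
  rintro r ⟨⟨x, hx⟩, rfl⟩
  calc ‖(inner ℂ (T x) x : ℂ)‖ ≤ ‖T x‖ * ‖x‖ := norm_inner_le_norm _ _
    _ ≤ ‖T‖ * ‖x‖ * ‖x‖ := by gcongr; exact T.le_opNorm x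
    _ = ‖T‖ := by rw [hx]; ring

lemma numRadius_nonneg (T : E →L[ℂ] E) : 0 ≤ numRadius T :=
  Real.iSup_nonneg fun _ => norm_nonneg _

lemma norm_inner_le_numRadius (T : E →L[ℂ] E) {x : E} (hx : ‖x‖ = 1) :
    ‖(inner ℂ (T x) x : ℂ)‖ ≤ numRadius T :=
  le_ciSup (numRadius_bddAbove T) (⟨x, hx⟩ : {x : E // ‖x‖ = 1})

lemma norm_inner_le_numRadius_mul_norm_sq (T : E →L[ℂ] E) (x : E) :
    ‖(inner ℂ (T x) x : ℂ)‖ ≤ numRadius T * ‖x‖ ^ 2 := by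
  rcases eq_or_ne x 0 with rfl | hx
  · simp
  have hx' : ‖x‖ ≠ 0 := norm_ne_zero_iff.mpr hx
  have hunit : ‖(‖x‖⁻¹ : ℂ) • x‖ = 1 := by
    rw [norm_smul, norm_inv, Complex.norm_real, norm_norm, inv_mul_cancel₀ hx']
  have hscale : (inner ℂ (T ((‖x‖⁻¹ : ℂ) • x)) ((‖x‖⁻¹ : ℂ) • x) : ℂ) =
      ((‖x‖ ^ 2)⁻¹ : ℝ) • (inner ℂ (T x) x : ℂ) := by
    rw [map_smul, inner_smul_left, inner_smul_right, Complex.real_smul]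
    simp only [map_inv₀, Complex.conj_ofReal]
    push_cast
    ring
  have := norm_inner_le_numRadius T hunit
  rw [hscale, norm_smul, Real.norm_of_nonneg (by positivity)] at this
  rwa [inv_mul_le_iff₀ (by positivity), mul_comm] at this

end NumRadius

lemma norm_toLp_diag_sq {F : Type*} [SeminormedAddCommGroup F] (x : F) :
    ‖(WithLp.toLp 2 (x, x) : WithLp 2 (F × F))‖ ^ 2 = 2 * ‖x‖ ^ 2 := by
  rw [WithLp.prod_norm_sq_eq_of_L2]
  simp only [WithLp.toLp_fst, WithLp.toLp_snd]
  ring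

lemma inner_offDiagOp_toLp_diag {H : Type*} [NormedAddCommGroup H] [InnerProductSpace ℂ H]
    (C D : H →L[ℂ] H) (x : H) :
    (inner ℂ (offDiagOp C D (WithLp.toLp 2 (x, x))) (WithLp.toLp 2 (x, x)) : ℂ) =
      inner ℂ ((C + D) x) x := by
  simp [offDiagOp, WithLp.prod_inner_apply]

theorem stmt_13_general {H : Type*} [NormedAddCommGroup H] [InnerProductSpace ℂ H]
    (X Y : H →L[ℂ] H) :
    numRadius (X + Y) ≤ 2 * numRadius (offDiagOp X Y) := by
  refine Real.iSup_le (fun ⟨x, hx⟩ => ?_) (mul_nonneg zero_le_two (numRadius_nonneg _))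
  calc ‖(inner ℂ ((X + Y) x) x : ℂ)‖
      = ‖(inner ℂ (offDiagOp X Y (WithLp.toLp 2 (x, x))) (WithLp.toLp 2 (x, x)) : ℂ)‖ := by
        rw [inner_offDiagOp_toLp_diag]
    _ ≤ numRadius (offDiagOp X Y) * ‖(WithLp.toLp 2 (x, x) : WithLp 2 (H × H))‖ ^ 2 :=
        norm_inner_le_numRadius_mul_norm_sq _ _
    _ = 2 * numRadius (offDiagOp X Y) := by rw [norm_toLp_diag_sq, hx]; ring

theorem stmt_13 {H : Type*} [NormedAddCommGroup H] [InnerProductSpace ℂ H] [CompleteSpace H]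
    (X Y : H →L[ℂ] H) :
    numRadius (X + Y) ≤ 2 * numRadius (offDiagOp X Y) :=
  stmt_13_general X Y
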